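/- arXiv:2108.04514 — 7 statements merged into one kernel-verified Lean document; each statement's English description precedes it below -/
import Mathlib

section
/- Let $R$ be a unital ring with derivation $\partial$, and let $p, u \in R$ with $u(1-p) = 1 = (1-p)u$. Write $p_j := \partial^j p$. Then for every $n \ge 1$, $\partial^n u = \sum_{(a_1,\dots,a_k) \models n} \chi(a_1\cdots a_k)\; u\,p_{a_1}\,u\,p_{a_2}\,u \cdots u\,p_{a_k}\,u$, where the sum is over all compositions $(a_1,\dots,a_k)$ of $n$ and $\chi(a_1\cdots a_k) = \prod_{i=1}^{k}\binom{a_i+\cdots+a_k}{a_i}$ is the signature character. -/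
open Finset

/-- The set of compositions of `n` (lists of positive integers summing to `n`). -/
def comps : ℕ → Finset (List ℕ+)
  | 0 => {[]}
  | n + 1 =>
    (Finset.range (n + 1)).attach.biUnion fun k =>
      (comps k.1).image fun l =>
        (⟨n + 1 - k.1, Nat.sub_pos_of_lt (Finset.mem_range.mp k.2)⟩ : ℕ+) :: l
  decreasing_by exact Finset.mem_range.mp k.2

/-- Signature character of a composition. -/
def chi : List ℕ+ → ℕ
  | [] => 1
  | a :: t => Nat.choose ((a : ℕ) + (t.map fun x => (x : ℕ)).sum) (a : ℕ) * chi t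

/-!
From `(1 - p) u = 1` we get `u = 1 + p u`, and since `D 1 = 0` the Leibniz rule gives
`(1 - p) Dⁿ⁺¹ u = ∑_{i + j = n} C(n + 1, i + 1) p_{i+1} Dʲ u`. Multiplying on the left by `u`
expresses `Dⁿ⁺¹ u` through lower derivatives of `u`; expanding these by induction, each
composition of `n + 1` arises exactly once as a first part `i + 1` followed by a composition
`l` of `j`, and `C(n + 1, i + 1) χ(l) = χ((i + 1) l)`.
-/

theorem AddMonoidHom.iterate_map_mul_of_leibniz {R : Type*} [NonUnitalNonAssocSemiring R]
    (D : R →+ R) (hD : ∀ x y : R, D (x * y) = D x * y + x * D y) (n : ℕ) (x y : R) :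
    D^[n] (x * y) = ∑ ij ∈ antidiagonal n, n.choose ij.1 • (D^[ij.1] x * D^[ij.2] y) := by
  induction n with
  | zero => simp
  | succ n ih =>
    rw [sum_antidiagonal_choose_succ_nsmul (fun i j => D^[i] x * D^[j] y) n,
      Function.iterate_succ_apply', ih]
    simp only [map_sum, map_nsmul, hD, smul_add, sum_add_distrib, Function.iterate_succ_apply']
    rw [add_comm]
    congr 1
    refine sum_congr rfl fun ij hij => ?_
    rw [n.choose_symm_of_eq_add (mem_antidiagonal.1 hij).symm]

theorem AddMonoidHom.map_one_eq_zero_of_leibniz {R : Type*} [NonAssocRing R]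
    (D : R →+ R) (hD : ∀ x y : R, D (x * y) = D x * y + x * D y) : D 1 = 0 := by
  simpa using hD 1 1

theorem AddMonoidHom.iterate_succ_apply_of_inverse_one_sub {R : Type*} [Ring R]
    (D : R →+ R) (hD : ∀ x y : R, D (x * y) = D x * y + x * D y) {p u : R}
    (hu : u * (1 - p) = 1) (hu' : (1 - p) * u = 1) (n : ℕ) :
    D^[n + 1] u =
      u * ∑ ij ∈ antidiagonal n, (n + 1).choose (ij.1 + 1) • (D^[ij.1 + 1] p * D^[ij.2] u) := by
  set S := ∑ ij ∈ antidiagonal n, (n + 1).choose (ij.1 + 1) • (D^[ij.1 + 1] p * D^[ij.2] u)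
  have hfix : u = 1 + p * u := by
    rwa [sub_mul, one_mul, sub_eq_iff_eq_add] at hu'
  have hsplit : D^[n + 1] u = p * D^[n + 1] u + S := by
    calc D^[n + 1] u = D^[n + 1] (p * u) := by
          rw [Function.iterate_succ_apply, Function.iterate_succ_apply]
          conv_lhs => rw [hfix, map_add, D.map_one_eq_zero_of_leibniz hD, zero_add]
      _ = p * D^[n + 1] u + S := by
          simp [D.iterate_map_mul_of_leibniz hD, Nat.sum_antidiagonal_succ, S]
  calc D^[n + 1] u = u * (1 - p) * D^[n + 1] u := by rw [hu, one_mul]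
    _ = u * S := by rw [mul_assoc, sub_mul, one_mul, sub_eq_of_eq_add' hsplit]

theorem comps_succ (n : ℕ) :
    comps (n + 1) = (antidiagonal n).biUnion fun ij => (comps ij.2).image (ij.1.succPNat :: ·) := by
  rw [comps]
  ext w
  simp only [mem_biUnion, mem_attach, mem_image, true_and, Subtype.exists, mem_range,
    HasAntidiagonal.mem_antidiagonal, Prod.exists]
  constructor
  · rintro ⟨k, hk, l, hl, rfl⟩
    refine ⟨n - k, k, by omega, l, hl, ?_⟩
    congr 1
    exact PNat.eq (by simp only [Nat.succPNat_coe, PNat.mk_coe]; omega)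
  · rintro ⟨i, j, rfl, l, hl, rfl⟩
    refine ⟨j, by omega, l, hl, ?_⟩
    congr 1
    exact PNat.eq (by simp only [Nat.succPNat_coe, PNat.mk_coe]; omega)

theorem sum_map_val_of_mem_comps {n : ℕ} {l : List ℕ+} (hl : l ∈ comps n) :
    (l.map PNat.val).sum = n := by
  induction n using Nat.strong_induction_on generalizing l with
  | _ n ih =>
  cases n with
  | zero => simp_all [comps]
  | succ n =>
    simp only [comps_succ, mem_biUnion, mem_image, HasAntidiagonal.mem_antidiagonal] at hl
    obtain ⟨⟨i, j⟩, hij, l, hl, rfl⟩ := hl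
    rw [List.map_cons, List.sum_cons, ih j (by omega) hl, Nat.succPNat_coe]
    omega

-- In `chi`, as in the main statement, the coercion to `ℕ` is elaborated as a lift of the whole
-- list through the list monad; `bind_pure_comp` turns it back into `List.map`.
theorem chi_cons (a : ℕ+) (l : List ℕ+) :
    chi (a :: l) = ((a : ℕ) + (l.map PNat.val).sum).choose a * chi l := by
  rw [chi, bind_pure_comp, List.map_eq_map, List.map_id']

theorem sum_comps_succ {M : Type*} [AddCommMonoid M] (n : ℕ) (F : List ℕ+ → M) :
    ∑ w ∈ comps (n + 1), F w = ∑ ij ∈ antidiagonal n, ∑ l ∈ comps ij.2, F (ij.1.succPNat :: l) := by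
  rw [comps_succ, sum_biUnion]
  · simp only [sum_image fun _ _ _ _ h => List.cons_injective h]
  · intro ij hij ij' hij' hne
    simp only [Function.onFun, disjoint_left, mem_image]
    rintro _ ⟨l, _, rfl⟩ ⟨l', _, h⟩
    rw [mem_coe, HasAntidiagonal.mem_antidiagonal] at hij hij'
    have hhead := Nat.succPNat_inj.mp (List.cons_eq_cons.mp h).1
    exact hne (Prod.ext hhead.symm (by omega))

theorem AddMonoidHom.iterate_apply_eq_sum_comps {R : Type*} [Ring R]
    (D : R →+ R) (hD : ∀ x y : R, D (x * y) = D x * y + x * D y) {p u : R}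
    (hu : u * (1 - p) = 1) (hu' : (1 - p) * u = 1) (n : ℕ) :
    D^[n] u = ∑ w ∈ comps n, chi w • (u * (w.map fun a : ℕ+ => D^[a] p * u).prod) := by
  induction n using Nat.strong_induction_on with
  | _ n ih =>
  cases n with
  | zero => simp [comps, chi]
  | succ n =>
    rw [D.iterate_succ_apply_of_inverse_one_sub hD hu hu', sum_comps_succ, mul_sum]
    refine sum_congr rfl fun ij hij => ?_
    rw [HasAntidiagonal.mem_antidiagonal] at hij
    rw [ih ij.2 (by omega), mul_sum, smul_sum, mul_sum]
    refine sum_congr rfl fun l hl => ?_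
    rw [chi_cons, sum_map_val_of_mem_comps hl, Nat.succPNat_coe,
      show ij.1 + 1 + ij.2 = n + 1 by omega]
    simp only [List.map_cons, List.prod_cons, Nat.succPNat_coe, mul_smul_comm, smul_smul, mul_assoc]

/-- Signature operator expansion: for a ring `R` with derivation `D`, `u` the
two-sided inverse of `1 - p`, and `p_j := Dʲ p`, we have for every `n ≥ 1` that
`Dⁿ u = ∑_{(a₁,…,a_k) ⊨ n} χ(a₁⋯a_k) u p_{a₁} u p_{a₂} u ⋯ u p_{a_k} u`, the sum
being over all compositions of `n`. -/
theorem signature_operator_expansion {R : Type*} [Ring R] (D : R → R)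
    (hadd : ∀ x y : R, D (x + y) = D x + D y)
    (hmul : ∀ x y : R, D (x * y) = D x * y + x * D y)
    (p u : R) (hu : u * (1 - p) = 1) (hu' : (1 - p) * u = 1) :
    ∀ n : ℕ, 1 ≤ n →
      D^[n] u = ∑ w ∈ comps n,
        chi w • (u * (w.map fun a => D^[(a : ℕ)] p * u).prod) := by
  intro n _
  simp only [bind_pure_comp, List.map_eq_map, List.map_map, Function.comp_def]
  exact (AddMonoidHom.mk' D hadd).iterate_apply_eq_sum_comps hmul hu hu' n
end

section
/- Suppose $F_1, F_2$ are Hilbert–Schmidt integral operators on $L^2((-\infty,0])$ with continuous square-integrable kernels $f_1(y,\xi;x)$, $f_2(\xi,z;x)$ depending on a real parameter $x$, and $H_1, H_2$ are Hankel operators with parameter $x$, i.e. $(H_i\phi)(y;x) = \int_{-\infty}^0 h_i(y+\xi+x)\phi(\xi)\,d\xi$ with $h_i$ continuously differentiable and the relevant integrals absolutely convergent. Then the kernel of $F_1\,\partial_x(H_1 H_2)\,F_2$ factorizes as $[F_1\partial_x(H_1H_2)F_2](y,z;x) = [F_1 H_1](y,0;x)\,[H_2 F_2](0,z;x)$, where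 $[\,\cdot\,]$ denotes the integral kernel of an operator. -/
open MeasureTheory Filter Set

/-!
Since the Hankel kernels depend on `ξ₁ + ξ₂ + x` and `ξ₂ + ξ₃ + x`, the `x`-derivative of
`h₁(ξ₁ + ξ₂ + x) h₂(ξ₂ + ξ₃ + x)` is its `ξ₂`-derivative. By the fundamental theorem of calculus
on `(-∞, 0]` and the decay of `hᵢ` at `-∞`, the `ξ₂`-integral collapses to the boundary value
`h₁(ξ₁ + x) h₂(ξ₃ + x)`, and Fubini splits what remains into the two kernels `[F₁H₁](y,0;x)` and
`[H₂F₂](0,z;x)`.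
-/

theorem hasDerivAt_mul_comp_const_add {h₁ h₂ : ℝ → ℝ} (hh₁ : Differentiable ℝ h₁)
    (hh₂ : Differentiable ℝ h₂) (p q t : ℝ) :
    HasDerivAt (fun u => h₁ (p + u) * h₂ (q + u))
      (deriv h₁ (p + t) * h₂ (q + t) + h₁ (p + t) * deriv h₂ (q + t)) t :=
  ((hh₁ (p + t)).hasDerivAt.comp_const_add p t).mul ((hh₂ (q + t)).hasDerivAt.comp_const_add q t)

theorem hasDerivAt_middle_eq_deriv_param {h₁ h₂ : ℝ → ℝ} (hh₁ : Differentiable ℝ h₁)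
    (hh₂ : Differentiable ℝ h₂) (a b x s : ℝ) :
    HasDerivAt (fun s => h₁ (a + s + x) * h₂ (s + b + x))
      (deriv (fun t => h₁ (a + s + t) * h₂ (s + b + t)) x) s := by
  have hparam := (hasDerivAt_mul_comp_const_add hh₁ hh₂ (a + s) (s + b) x).deriv
  have hmiddle := hasDerivAt_mul_comp_const_add hh₁ hh₂ (a + x) (b + x) s
  rw [hparam]
  convert hmiddle using 1
  · ext u
    ring_nf
  · ring_nf

theorem integral_Iic_deriv_param_eq {h₁ h₂ : ℝ → ℝ} (hh₁ : Differentiable ℝ h₁)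
    (hh₂ : Differentiable ℝ h₂) (hdecay₁ : Tendsto h₁ atBot (nhds 0))
    (hdecay₂ : Tendsto h₂ atBot (nhds 0)) (a b x c d : ℝ)
    (hint : IntegrableOn
      (fun s => c * deriv (fun t => h₁ (a + s + t) * h₂ (s + b + t)) x * d) (Iic 0)) :
    ∫ s in Iic (0 : ℝ), c * deriv (fun t => h₁ (a + s + t) * h₂ (s + b + t)) x * d
      = c * h₁ (a + x) * (h₂ (b + x) * d) := by
  have hderiv : ∀ s ∈ Iic (0 : ℝ), HasDerivAt (fun s => c * (h₁ (a + s + x) * h₂ (s + b + x)) * d)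
      (c * deriv (fun t => h₁ (a + s + t) * h₂ (s + b + t)) x * d) s := fun s _ =>
    ((hasDerivAt_middle_eq_deriv_param hh₁ hh₂ a b x s).const_mul c).mul_const d
  have htendsto : Tendsto (fun s => c * (h₁ (a + s + x) * h₂ (s + b + x)) * d) atBot (nhds 0) := by
    have h₁' := hdecay₁.comp (tendsto_atBot_add_const_right _ x
      (tendsto_atBot_add_const_left _ a tendsto_id))
    have h₂' := hdecay₂.comp (tendsto_atBot_add_const_right _ x
      (tendsto_atBot_add_const_right _ b tendsto_id))
    simpa using ((h₁'.mul h₂').const_mul c).mul_const d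
  rw [integral_Iic_of_hasDerivAt_of_tendsto' hderiv hint htendsto]
  simp only [add_zero, zero_add, sub_zero]
  ring

theorem integral_integral_integral_eq_mul_of_middle {α β γ : Type*} [MeasurableSpace α]
    [MeasurableSpace β] [MeasurableSpace γ] {μ : Measure α} {ν : Measure β} {κ : Measure γ}
    [SFinite μ] [SFinite ν] [SFinite κ] {F : α → β → γ → ℝ} {u : α → ℝ} {v : γ → ℝ}
    (hF : Integrable (fun p => F p.1 p.2.1 p.2.2) (μ.prod (ν.prod κ)))
    (hmiddle : ∀ a c, Integrable (fun b => F a b c) ν → ∫ b, F a b c ∂ν = u a * v c) :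
    ∫ a, ∫ b, ∫ c, F a b c ∂κ ∂ν ∂μ = (∫ a, u a ∂μ) * ∫ c, v c ∂κ := by
  have hinner : ∀ᵐ a ∂μ, ∫ b, ∫ c, F a b c ∂κ ∂ν = u a * ∫ c, v c ∂κ := by
    filter_upwards [hF.prod_right_ae] with a ha
    have hslices : ∀ᵐ c ∂κ, Integrable (fun b => F a b c) ν := by
      simpa using ha.swap.prod_right_ae
    rw [integral_integral_swap ha, ← integral_const_mul]
    exact integral_congr_ae (hslices.mono fun c hc => hmiddle a c hc)
  rw [integral_congr_ae hinner, integral_mul_const]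

theorem poppe_kernel_product_rule_general
    (f1 f2 : ℝ → ℝ → ℝ → ℝ) (h1 h2 : ℝ → ℝ) (x y z : ℝ)
    (hh1 : ContDiff ℝ 1 h1) (hh2 : ContDiff ℝ 1 h2)
    (hdecay1 : Tendsto h1 atBot (nhds 0)) (hdecay2 : Tendsto h2 atBot (nhds 0))
    (hint3 : IntegrableOn
      (fun ξ : ℝ × ℝ × ℝ => f1 y ξ.1 x *
        deriv (fun t => h1 (ξ.1 + ξ.2.1 + t) * h2 (ξ.2.1 + ξ.2.2 + t)) x *
        f2 ξ.2.2 z x)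
      (Set.Iic 0 ×ˢ Set.Iic 0 ×ˢ Set.Iic 0)) :
    (∫ ξ1 in Set.Iic (0:ℝ), ∫ ξ2 in Set.Iic (0:ℝ), ∫ ξ3 in Set.Iic (0:ℝ),
        f1 y ξ1 x *
          deriv (fun t => h1 (ξ1 + ξ2 + t) * h2 (ξ2 + ξ3 + t)) x *
          f2 ξ3 z x)
      = (∫ ξ in Set.Iic (0:ℝ), f1 y ξ x * h1 (ξ + x)) *
        (∫ ξ in Set.Iic (0:ℝ), h2 (ξ + x) * f2 ξ z x) := by
  rw [IntegrableOn, Measure.volume_eq_prod, ← Measure.prod_restrict, Measure.volume_eq_prod,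
    ← Measure.prod_restrict] at hint3
  exact integral_integral_integral_eq_mul_of_middle hint3 fun ξ1 ξ3 =>
    integral_Iic_deriv_param_eq (hh1.differentiable one_ne_zero) (hh2.differentiable one_ne_zero)
      hdecay1 hdecay2 ξ1 ξ3 x _ _

/-- Pöppe's kernel product rule.  Let `F₁, F₂` be Hilbert–Schmidt integral operators
on `L²((-∞,0])` with continuous square-integrable kernels `f₁(y,ξ;x)`, `f₂(ξ,z;x)`
depending on a real parameter `x`, and let `H₁, H₂` be Hankel operators with
parameter `x`, with kernels `h₁(y+ξ+x)`, `h₂(y+ξ+x)`, the `hᵢ` continuously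
differentiable (decaying at `-∞`) and the relevant integrals absolutely convergent.
Then the kernel of `F₁ ∂ₓ(H₁H₂) F₂`, given by the triple iterated integral, factorizes
as `[F₁H₁](y,0;x) [H₂F₂](0,z;x)`. -/
theorem poppe_kernel_product_rule
    (f1 f2 : ℝ → ℝ → ℝ → ℝ) (h1 h2 : ℝ → ℝ) (x y z : ℝ)
    (hf1c : Continuous fun p : ℝ × ℝ × ℝ => f1 p.1 p.2.1 p.2.2)
    (hf2c : Continuous fun p : ℝ × ℝ × ℝ => f2 p.1 p.2.1 p.2.2)
    (hf1L2 : MemLp (fun p : ℝ × ℝ => f1 p.1 p.2 x) 2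
      (volume.restrict (Set.Iic 0 ×ˢ Set.Iic 0)))
    (hf2L2 : MemLp (fun p : ℝ × ℝ => f2 p.1 p.2 x) 2
      (volume.restrict (Set.Iic 0 ×ˢ Set.Iic 0)))
    (hh1 : ContDiff ℝ 1 h1) (hh2 : ContDiff ℝ 1 h2)
    (hh1L2 : MemLp h1 2 volume) (hh2L2 : MemLp h2 2 volume)
    (hdecay1 : Tendsto h1 atBot (nhds 0)) (hdecay2 : Tendsto h2 atBot (nhds 0))
    (hint1 : IntegrableOn (fun ξ => f1 y ξ x * h1 (ξ + x)) (Set.Iic 0))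
    (hint2 : IntegrableOn (fun ξ => h2 (ξ + x) * f2 ξ z x) (Set.Iic 0))
    (hint3 : IntegrableOn
      (fun ξ : ℝ × ℝ × ℝ => f1 y ξ.1 x *
        deriv (fun t => h1 (ξ.1 + ξ.2.1 + t) * h2 (ξ.2.1 + ξ.2.2 + t)) x *
        f2 ξ.2.2 z x)
      (Set.Iic 0 ×ˢ Set.Iic 0 ×ˢ Set.Iic 0)) :
    (∫ ξ1 in Set.Iic (0:ℝ), ∫ ξ2 in Set.Iic (0:ℝ), ∫ ξ3 in Set.Iic (0:ℝ),
        f1 y ξ1 x *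
          deriv (fun t => h1 (ξ1 + ξ2 + t) * h2 (ξ2 + ξ3 + t)) x *
          f2 ξ3 z x)
      = (∫ ξ in Set.Iic (0:ℝ), f1 y ξ x * h1 (ξ + x)) *
        (∫ ξ in Set.Iic (0:ℝ), h2 (ξ + x) * f2 ξ z x) :=
  poppe_kernel_product_rule_general f1 f2 h1 h2 x y z hh1 hh2 hdecay1 hdecay2 hint3
end

section
/- The Pöppe product on the free real vector space over nonempty compositions is associative: for all elements $x, y, z$ of $\mathbb{R}\langle \mathcal{C}\rangle_*$, $(x * y) * z = x * (y * z)$. -/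
/-!
The product of `u a` and `b v` only alters the junction between the two factors: it raises the
last letter of the left factor, raises the first letter of the right one, or inserts a `1`
between them. Hence for nonempty words `u, v, w` both `(u * v) * w` and `u * (v * w)` expand
into the same nine words, one for each pair of operations at the junctions `u|v` and `v|w`;
the only interaction, when `v` is a single letter, is that raising its first and its last letter
commute.
-/

open Finset

/-- The Pöppe product of two basis compositions `u a` and `b v`:
`(u a) * (b v) = u(a+1)bv + ua(b+1)v + 2·(ua1bv)`, as an element of the free
vector space on compositions (zero if either composition is empty). -/
noncomputable def ppWord (u v : List ℕ+) : List ℕ+ →₀ ℝ :=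
  match u.reverse, v with
  | a :: ur, b :: v' =>
      Finsupp.single (((a + 1) :: ur).reverse ++ b :: v') 1
      + Finsupp.single ((a :: ur).reverse ++ (b + 1) :: v') 1
      + (2 : ℝ) • Finsupp.single ((a :: ur).reverse ++ (1 : ℕ+) :: b :: v') 1
  | _, _ => 0

/-- The bilinear Pöppe product on the free vector space on compositions. -/
noncomputable def poppeMul (x y : List ℕ+ →₀ ℝ) : List ℕ+ →₀ ℝ :=
  x.sum fun u cu => y.sum fun v cv => (cu * cv) • ppWord u v

/-- The signature expansion of order `n`: `∑_{w ⊨ n} χ(w)·w`. -/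
noncomputable def sigExp (n : ℕ) : List ℕ+ →₀ ℝ :=
  ∑ w ∈ comps n, (chi w : ℝ) • Finsupp.single w 1

/-- The derivation of a single composition: the sum of all single-letter increments
plus the sum of all insertions of a letter `1` into the gaps. -/
noncomputable def derWord (w : List ℕ+) : List ℕ+ →₀ ℝ :=
  (∑ k ∈ Finset.range w.length,
      Finsupp.single (w.take k ++ (w.getD k 1 + 1) :: w.drop (k + 1)) (1 : ℝ))
  + ∑ k ∈ Finset.range (w.length + 1),
      Finsupp.single (w.take k ++ (1 : ℕ+) :: w.drop k) (1 : ℝ)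

/-- The derivation, extended linearly to the free vector space on compositions. -/
noncomputable def der (x : List ℕ+ →₀ ℝ) : List ℕ+ →₀ ℝ :=
  x.sum fun w c => c • derWord w

open Finsupp

theorem Finsupp.bilinear_assoc_of_single {α R : Type*} [CommSemiring R]
    (B : (α →₀ R) →ₗ[R] (α →₀ R) →ₗ[R] α →₀ R)
    (h : ∀ u v w, B (B (single u 1) (single v 1)) (single w 1) =
      B (single u 1) (B (single v 1) (single w 1)))
    (x y z : α →₀ R) : B (B x y) z = B x (B y z) := by
  have : B.compr₂ B = (LinearMap.llcomp R _ _ _ ∘ₗ B).compl₂ B := by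
    ext u v w : 6
    exact h u v w
  exact congr($this x y z)

theorem List.modifyHead_append_of_left_ne_nil {α : Type*} (f : α → α) {l₁ : List α}
    (h : l₁ ≠ []) (l₂ : List α) : (l₁ ++ l₂).modifyHead f = l₁.modifyHead f ++ l₂ := by
  cases l₁ with
  | nil => contradiction
  | cons a l => rfl

@[simp]
theorem List.modifyLast_eq_nil_iff {α : Type*} {f : α → α} {l : List α} :
    l.modifyLast f = [] ↔ l = [] := by
  rcases List.eq_nil_or_concat' l with rfl | ⟨l, a, rfl⟩
  · simp [List.modifyLast, List.modifyLast.go]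
  · simp [List.modifyLast_concat]

theorem List.modifyLast_cons_of_ne_nil {α : Type*} (f : α → α) (a : α) {l : List α}
    (h : l ≠ []) : (a :: l).modifyLast f = a :: l.modifyLast f :=
  List.modifyLast_append_of_right_ne_nil f [a] l h

theorem List.modifyLast_modifyHead_comm {α : Type*} {f g : α → α} (hfg : ∀ a, f (g a) = g (f a))
    (l : List α) : (l.modifyHead g).modifyLast f = (l.modifyLast f).modifyHead g := by
  match l with
  | [] => rfl
  | [a] => exact congr_arg ([·]) (hfg a)
  | a :: b :: l =>
    simp only [List.modifyHead_cons, List.modifyLast_cons_of_ne_nil _ _ (List.cons_ne_nil b l)]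

noncomputable def poppeBilin : (List ℕ+ →₀ ℝ) →ₗ[ℝ] (List ℕ+ →₀ ℝ) →ₗ[ℝ] List ℕ+ →₀ ℝ :=
  linearCombination ℝ fun u => linearCombination ℝ (ppWord u)

theorem poppeMul_eq_poppeBilin (x y : List ℕ+ →₀ ℝ) : poppeMul x y = poppeBilin x y := by
  simp [poppeMul, poppeBilin, linearCombination_apply, LinearMap.finsupp_sum_apply,
    Finsupp.smul_sum, mul_smul]

theorem poppeBilin_single_single (u v : List ℕ+) :
    poppeBilin (single u 1) (single v 1) = ppWord u v := by
  simp [poppeBilin]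

theorem ppWord_nil_left (v : List ℕ+) : ppWord [] v = 0 := by
  cases v <;> rfl

theorem ppWord_nil_right (u : List ℕ+) : ppWord u [] = 0 := by
  unfold ppWord
  cases u.reverse <;> rfl

theorem poppeBilin_single_nil_left (y : List ℕ+ →₀ ℝ) : poppeBilin (single [] 1) y = 0 := by
  simp [poppeBilin, linearCombination_apply, ppWord_nil_left]

theorem poppeBilin_single_nil_right (x : List ℕ+ →₀ ℝ) : poppeBilin x (single [] 1) = 0 := by
  simp [poppeBilin, linearCombination_apply, ppWord_nil_right]

theorem ppWord_of_ne_nil {u v : List ℕ+} (hu : u ≠ []) (hv : v ≠ []) :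
    ppWord u v = single (u.modifyLast (· + 1) ++ v) 1 + single (u ++ v.modifyHead (· + 1)) 1
      + (2 : ℝ) • single (u ++ 1 :: v) 1 := by
  obtain ⟨u, a, rfl⟩ := (List.eq_nil_or_concat' u).resolve_left hu
  obtain ⟨b, v, rfl⟩ := List.exists_cons_of_ne_nil hv
  simp [ppWord, List.modifyLast_concat]

theorem ppWord_assoc (u v w : List ℕ+) :
    poppeBilin (ppWord u v) (single w 1) = poppeBilin (single u 1) (ppWord v w) := by
  rcases eq_or_ne u [] with rfl | hu
  · simp [ppWord_nil_left, poppeBilin_single_nil_left]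
  rcases eq_or_ne v [] with rfl | hv
  · simp [ppWord_nil_left, ppWord_nil_right]
  rcases eq_or_ne w [] with rfl | hw
  · simp [ppWord_nil_right, poppeBilin_single_nil_right]
  simp (disch := simp [hu, hv, hw]) only [ppWord_of_ne_nil, map_add, map_smul,
    LinearMap.add_apply, LinearMap.smul_apply, poppeBilin_single_single,
    List.modifyLast_append_of_right_ne_nil, List.modifyLast_cons_of_ne_nil,
    List.modifyHead_append_of_left_ne_nil, List.modifyLast_modifyHead_comm,
    List.append_assoc, List.cons_append]
  module

/-- The Pöppe product on the free real vector space over nonempty compositions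
is associative. -/
theorem poppeMul_assoc (x y z : List ℕ+ →₀ ℝ) :
    poppeMul (poppeMul x y) z = poppeMul x (poppeMul y z) := by
  simp only [poppeMul_eq_poppeBilin]
  refine Finsupp.bilinear_assoc_of_single _ (fun u v w => ?_) x y z
  simpa only [poppeBilin_single_single] using ppWord_assoc u v w
end

section
/- In the free real vector space over nonempty compositions with the Pöppe product $*$ and the derivation $\mathrm{d}$, for any compositions $u\,a$ (ending in the letter $a$) and $b\,v$ (beginning with the letter $b$) one has $(u\,a) * (b\,v) = \mathrm{d}(u\,a\,b\,v) - (\mathrm{d}u)\,a\,b\,v - u\,a\,b\,(\mathrm{d}v) + u\,a\,1\,b\,v$, where $(\mathrm{d}u)\,a\,b\,v$ means the linear extension of concatenating each term of $\mathrm{d}u$ with $a\,b\,v$ (and $\mathrm{d}$ of the empty composition is $0$, with the convention that the corresponding insertion/concatenation terms are adjusted accordingly). -/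
open Finset

lemma derWord_nil : derWord [] = Finsupp.single [1] 1 := by
  simp [derWord]

lemma mapDomain_sum_single {α β : Type*} (f : α → β) (s : Finset ℕ) (g : ℕ → α) :
    Finsupp.mapDomain f (∑ k ∈ s, Finsupp.single (g k) (1 : ℝ))
      = ∑ k ∈ s, Finsupp.single (f (g k)) (1 : ℝ) := by
  rw [Finsupp.mapDomain_finset_sum]
  simp [Finsupp.mapDomain_single]

lemma mapDomain_mapDomain {α β γ : Type*} (f : β → γ) (g : α → β) (x : α →₀ ℝ) :
    Finsupp.mapDomain f (Finsupp.mapDomain g x) = Finsupp.mapDomain (fun a => f (g a)) x :=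
  (Finsupp.mapDomain_comp).symm

lemma derWord_cons (c : ℕ+) (z : List ℕ+) :
    derWord (c :: z) = Finsupp.single ((c + 1) :: z) 1 + Finsupp.single (1 :: c :: z) 1
      + Finsupp.mapDomain (c :: ·) (derWord z) := by
  unfold derWord
  rw [Finsupp.mapDomain_add, mapDomain_sum_single, mapDomain_sum_single]
  simp only [List.length_cons, Finset.sum_range_succ']
  simp only [List.take_succ_cons, List.getD_cons_succ, List.drop_succ_cons, List.take_zero,
    List.getD_cons_zero, List.drop_zero, List.nil_append, List.take_nil, List.drop_nil,
    List.cons_append, List.singleton_append]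
  abel

lemma mapDomain_sub {α β : Type*} (f : α → β) (x y : α →₀ ℝ) :
    Finsupp.mapDomain f (x - y) = Finsupp.mapDomain f x - Finsupp.mapDomain f y :=
  (Finsupp.mapDomain.addMonoidHom f).map_sub x y

lemma derWord_append (x y : List ℕ+) :
    derWord (x ++ y) = Finsupp.mapDomain (· ++ y) (derWord x)
      + Finsupp.mapDomain (x ++ ·) (derWord y)
      - Finsupp.single (x ++ (1 : ℕ+) :: y) 1 := by
  induction x with
  | nil =>
      rw [derWord_nil, Finsupp.mapDomain_single,
        show (fun w : List ℕ+ => [] ++ w) = id from rfl, Finsupp.mapDomain_id]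
      simp only [List.nil_append, List.singleton_append]
      abel
  | cons c x' ih =>
      have h1 : Finsupp.mapDomain (c :: ·) (Finsupp.mapDomain (· ++ y) (derWord x'))
          = Finsupp.mapDomain (· ++ y) (Finsupp.mapDomain (c :: ·) (derWord x')) := by
        rw [mapDomain_mapDomain, mapDomain_mapDomain]; rfl
      have h2 : Finsupp.mapDomain (c :: ·) (Finsupp.mapDomain (x' ++ ·) (derWord y))
          = Finsupp.mapDomain ((c :: x') ++ ·) (derWord y) := by
        rw [mapDomain_mapDomain]; rfl
      rw [show (c :: x') ++ y = c :: (x' ++ y) from rfl, derWord_cons, ih, derWord_cons c x']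
      simp only [Finsupp.mapDomain_add, mapDomain_sub, Finsupp.mapDomain_single,
        h1, h2, List.cons_append]
      abel

/-- Pöppe product via the derivation: for compositions `u a` (ending in `a`) and
`b v` (beginning with `b`),
`(u a) * (b v) = d(u a b v) - (d u) a b v - u a b (d v) + u a 1 b v`,
where `(d u) a b v` denotes the linear extension of concatenating each term of
`d u` with `a b v` (with the convention for the empty composition implemented by
`derWord [] = [1]`, adjusting the insertion/concatenation terms accordingly). -/
theorem poppe_product_via_derivation (u v : List ℕ+) (a b : ℕ+) :
    poppeMul (Finsupp.single (u ++ [a]) 1) (Finsupp.single (b :: v) 1)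
      = der (Finsupp.single (u ++ a :: b :: v) 1)
        - ((derWord u).sum fun w c => Finsupp.single (w ++ a :: b :: v) c)
        - ((derWord v).sum fun w c => Finsupp.single (u ++ a :: b :: w) c)
        + Finsupp.single (u ++ a :: (1 : ℕ+) :: b :: v) 1 := by
  have hder : der (Finsupp.single (u ++ a :: b :: v) 1) = derWord (u ++ a :: b :: v) := by
    unfold der
    rw [Finsupp.sum_single_index (by rw [zero_smul]), one_smul]
  have hsum1 : ((derWord u).sum fun w c => Finsupp.single (w ++ a :: b :: v) c)
      = Finsupp.mapDomain (· ++ a :: b :: v) (derWord u) := rfl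
  have hsum2 : ((derWord v).sum fun w c => Finsupp.single (u ++ a :: b :: w) c)
      = Finsupp.mapDomain (fun w => u ++ a :: b :: w) (derWord v) := rfl
  have hL : poppeMul (Finsupp.single (u ++ [a]) 1) (Finsupp.single (b :: v) 1)
      = ppWord (u ++ [a]) (b :: v) := by
    unfold poppeMul
    rw [Finsupp.sum_single_index (by simp), Finsupp.sum_single_index (by simp)]
    rw [one_mul, one_smul]
  have hpp : ppWord (u ++ [a]) (b :: v)
      = Finsupp.single (u ++ (a + 1) :: b :: v) 1 + Finsupp.single (u ++ a :: (b + 1) :: v) 1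
        + (2 : ℝ) • Finsupp.single (u ++ a :: (1 : ℕ+) :: b :: v) 1 := by
    unfold ppWord
    rw [show (u ++ [a]).reverse = a :: u.reverse by simp]
    simp [List.append_assoc]
  rw [hL, hpp, hder, hsum1, hsum2, derWord_append u (a :: b :: v), derWord_cons a,
    derWord_cons b]
  simp only [Finsupp.mapDomain_add, Finsupp.mapDomain_single, mapDomain_mapDomain,
    List.cons_append, List.singleton_append]
  rw [two_smul]
  abel
end

section
/- In the Pöppe algebra of compositions, the single-letter composition $5$ satisfies the identity $5 = \widehat{\underline{5}} - 5\cdot\big(\widehat{\underline{3}}*\widehat{\underline{1}} + \widehat{\underline{2}}*\widehat{\underline{2}} + \widehat{\underline{1}}*\widehat{\underline{3}}\big) + 10\cdot\big(\widehat{\underline{1}}*\widehat{\underline{1}}*\widehat{\underline{1}}\big)$, where $\widehat{\underline{n}} = \sum_{w\models n}\chi(w)\,w$ is the signature expansion. This establishes the fifth-order member of the noncommutative potential Korteweg–de Vries hierarchy as a Pöppe polynomial. -/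
open Finset

-- auxiliary lemmas
lemma comps_zero : comps 0 = {[]} := by rw [comps]

lemma comps_succ_s11 (n : ℕ) : comps (n+1) =
    (Finset.range (n+1)).biUnion fun k => (comps k).image fun l => (Nat.toPNat' (n+1-k)) :: l := by
  rw [comps]
  ext a
  simp only [Finset.mem_biUnion, Finset.mem_attach, Finset.mem_image, true_and,
    Subtype.exists, Finset.mem_range]
  constructor
  · rintro ⟨k, hk, l, hl, rfl⟩
    exact ⟨k, hk, l, hl, by congr 1; apply PNat.coe_injective; simp [Nat.toPNat']; omega⟩
  · rintro ⟨k, hk, l, hl, rfl⟩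
    exact ⟨k, hk, l, hl, by congr 1; apply PNat.coe_injective; simp [Nat.toPNat']; omega⟩

lemma comps_one : comps 1 = {[1]} := by
  rw [comps_succ_s11]; simp [Finset.range_add_one, comps_zero]; decide

lemma comps_two : comps 2 = {[2], [1,1]} := by
  rw [comps_succ_s11]; simp [Finset.range_add_one, comps_zero, comps_one]; decide

lemma comps_three : comps 3 = {[3], [2,1], [1,2], [1,1,1]} := by
  rw [comps_succ_s11]; simp [Finset.range_add_one, comps_zero, comps_one, comps_two]; decide

lemma comps_four : comps 4 = {[4],[3,1],[2,2],[2,1,1],[1,3],[1,2,1],[1,1,2],[1,1,1,1]} := by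
  rw [comps_succ_s11]; simp [Finset.range_add_one, comps_zero, comps_one, comps_two, comps_three]; decide

lemma comps_five : comps 5 = {[5],[4,1],[3,2],[3,1,1],[2,3],[2,2,1],[2,1,2],[2,1,1,1],
    [1,4],[1,3,1],[1,2,2],[1,2,1,1],[1,1,3],[1,1,2,1],[1,1,1,2],[1,1,1,1,1]} := by
  rw [comps_succ_s11]
  simp [Finset.range_add_one, comps_zero, comps_one, comps_two, comps_three, comps_four]
  decide

lemma pn1 : (1:ℕ+)+1 = 2 := rfl
lemma pn2 : (2:ℕ+)+1 = 3 := rfl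
lemma pn3 : (3:ℕ+)+1 = 4 := rfl
lemma pn4 : (4:ℕ+)+1 = 5 := rfl

lemma poppeMul_single_single (u v : List ℕ+) (c d : ℝ) :
    poppeMul (Finsupp.single u c) (Finsupp.single v d) = (c * d) • ppWord u v := by
  unfold poppeMul
  rw [Finsupp.sum_single_index (by simp), Finsupp.sum_single_index (by simp)]

lemma poppeMul_add_left (x y z : List ℕ+ →₀ ℝ) :
    poppeMul (x + y) z = poppeMul x z + poppeMul y z := by
  unfold poppeMul
  rw [Finsupp.sum_add_index] <;> simp [add_mul, add_smul, Finsupp.sum_add]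

lemma poppeMul_add_right (x y z : List ℕ+ →₀ ℝ) :
    poppeMul x (y + z) = poppeMul x y + poppeMul x z := by
  unfold poppeMul
  rw [← Finsupp.sum_add]
  congr 1; ext u cu
  rw [Finsupp.sum_add_index] <;> simp [mul_add, add_smul]

lemma poppeMul_smul_left (c : ℝ) (x y : List ℕ+ →₀ ℝ) :
    poppeMul (c • x) y = c • poppeMul x y := by
  unfold poppeMul
  rw [Finsupp.sum_smul_index (by simp), Finsupp.smul_sum]
  simp [Finsupp.smul_sum, mul_assoc, mul_smul]

lemma poppeMul_smul_right (c : ℝ) (x y : List ℕ+ →₀ ℝ) :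
    poppeMul x (c • y) = c • poppeMul x y := by
  unfold poppeMul
  rw [Finsupp.smul_sum]
  congr 1; ext u cu
  rw [Finsupp.sum_smul_index (by simp), Finsupp.smul_sum]
  simp [mul_smul, mul_left_comm]

lemma sig1 : sigExp 1 = (1:ℝ) • Finsupp.single [1] (1:ℝ) := by
  rw [sigExp, comps_one, Finset.sum_singleton]; norm_num [show chi [5] = 1 from rfl, show chi [4, 1] = 5 from rfl, show chi [3, 2] = 10 from rfl, show chi [3, 1, 1] = 20 from rfl, show chi [2, 3] = 10 from rfl, show chi [2, 2, 1] = 30 from rfl, show chi [2, 1, 2] = 30 from rfl, show chi [2, 1, 1, 1] = 60 from rfl, show chi [1, 4] = 5 from rfl, show chi [1, 3, 1] = 20 from rfl, show chi [1, 2, 2] = 30 from rfl, show chi [1, 2, 1, 1] = 60 from rfl, show chi [1, 1, 3] = 20 from rfl, show chi [1, 1, 2, 1] = 60 from rfl, show chi [1, 1, 1, 2] = 60 from rfl, show chi [1, 1, 1, 1, 1] = 120 from rfl, show chi [1] = 1 from rfl, show chi [2] = 1 from rfl, show chi [1, 1] = 2 from rfl, show chi [3] = 1 from rfl, show chi [2,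 1] = 3 from rfl, show chi [1, 2] = 3 from rfl, show chi [1, 1, 1] = 6 from rfl]

lemma sig2 : sigExp 2 = (1:ℝ) • Finsupp.single [2] (1:ℝ) + (2:ℝ) • Finsupp.single [1,1] (1:ℝ) := by
  rw [sigExp, comps_two, Finset.sum_insert (by decide), Finset.sum_singleton]
  norm_num [show chi [5] = 1 from rfl, show chi [4, 1] = 5 from rfl, show chi [3, 2] = 10 from rfl, show chi [3, 1, 1] = 20 from rfl, show chi [2, 3] = 10 from rfl, show chi [2, 2, 1] = 30 from rfl, show chi [2, 1, 2] = 30 from rfl, show chi [2, 1, 1, 1] = 60 from rfl, show chi [1, 4] = 5 from rfl, show chi [1, 3, 1] = 20 from rfl, show chi [1, 2, 2] = 30 from rfl, show chi [1, 2, 1, 1] = 60 from rfl, show chi [1, 1, 3] = 20 from rfl, show chi [1, 1, 2, 1] = 60 from rfl, show chi [1, 1, 1, 2] = 60 from rfl, show chi [1, 1, 1, 1, 1] = 120 from rfl, show chi [1] = 1 from rfl, show chi [2] = 1 from rfl, show chi [1, 1] = 2 from rfl, show chi [3] = 1 from rfl, show chi [2, 1] = 3 from rfl, show chi [1, 2]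 = 3 from rfl, show chi [1, 1, 1] = 6 from rfl]

lemma sig3 : sigExp 3 = (1:ℝ) • Finsupp.single [3] (1:ℝ) + (3:ℝ) • Finsupp.single [2,1] (1:ℝ)
    + (3:ℝ) • Finsupp.single [1,2] (1:ℝ) + (6:ℝ) • Finsupp.single [1,1,1] (1:ℝ) := by
  rw [sigExp, comps_three, Finset.sum_insert (by decide), Finset.sum_insert (by decide),
    Finset.sum_insert (by decide), Finset.sum_singleton]
  norm_num [show chi [5] = 1 from rfl, show chi [4, 1] = 5 from rfl, show chi [3, 2] = 10 from rfl, show chi [3, 1, 1] = 20 from rfl, show chi [2, 3] = 10 from rfl, show chi [2, 2, 1] = 30 from rfl, show chi [2, 1, 2] = 30 from rfl, show chi [2, 1, 1, 1] = 60 from rfl, show chi [1, 4] = 5 from rfl, show chi [1, 3, 1] = 20 from rfl, show chi [1, 2, 2] = 30 from rfl, show chi [1, 2, 1, 1] = 60 from rfl, show chi [1, 1, 3] = 20 from rfl, show chi [1, 1, 2, 1] = 60 from rfl, show chi [1, 1, 1, 2] = 60 from rfl, show chi [1, 1, 1, 1, 1] = 120 from rfl, show chi [1] = 1 from rfl, show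 chi [2] = 1 from rfl, show chi [1, 1] = 2 from rfl, show chi [3] = 1 from rfl, show chi [2, 1] = 3 from rfl, show chi [1, 2] = 3 from rfl, show chi [1, 1, 1] = 6 from rfl]
  abel

lemma sig5 : sigExp 5 =
    (1:ℝ) • Finsupp.single [5] (1:ℝ) + (5:ℝ) • Finsupp.single [4, 1] (1:ℝ) + (10:ℝ) • Finsupp.single [3, 2] (1:ℝ) + (20:ℝ) • Finsupp.single [3, 1, 1] (1:ℝ) + (10:ℝ) • Finsupp.single [2, 3] (1:ℝ) + (30:ℝ) • Finsupp.single [2, 2, 1] (1:ℝ) + (30:ℝ) • Finsupp.single [2, 1, 2] (1:ℝ) + (60:ℝ) • Finsupp.single [2, 1, 1, 1] (1:ℝ) + (5:ℝ) • Finsupp.single [1, 4] (1:ℝ) + (20:ℝ) • Finsupp.single [1, 3, 1] (1:ℝ) + (30:ℝ) • Finsupp.single [1, 2, 2] (1:ℝ) + (60:ℝ) • Finsupp.single [1, 2, 1, 1] (1:ℝ) + (20:ℝ) • Finsupp.single [1, 1, 3] (1:ℝ) + (60:ℝ) • Finsupp.single [1, 1, 2, 1] (1:ℝ) + (60:ℝ)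 • Finsupp.single [1, 1, 1, 2] (1:ℝ) + (120:ℝ) • Finsupp.single [1, 1, 1, 1, 1] (1:ℝ) := by
  rw [sigExp, comps_five, Finset.sum_insert (by decide), Finset.sum_insert (by decide),
    Finset.sum_insert (by decide), Finset.sum_insert (by decide), Finset.sum_insert (by decide),
    Finset.sum_insert (by decide), Finset.sum_insert (by decide), Finset.sum_insert (by decide),
    Finset.sum_insert (by decide), Finset.sum_insert (by decide), Finset.sum_insert (by decide),
    Finset.sum_insert (by decide), Finset.sum_insert (by decide), Finset.sum_insert (by decide),
    Finset.sum_insert (by decide), Finset.sum_singleton]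
  norm_num [show chi [5] = 1 from rfl, show chi [4, 1] = 5 from rfl, show chi [3, 2] = 10 from rfl, show chi [3, 1, 1] = 20 from rfl, show chi [2, 3] = 10 from rfl, show chi [2, 2, 1] = 30 from rfl, show chi [2, 1, 2] = 30 from rfl, show chi [2, 1, 1, 1] = 60 from rfl, show chi [1, 4] = 5 from rfl, show chi [1, 3, 1] = 20 from rfl, show chi [1, 2, 2] = 30 from rfl, show chi [1, 2, 1, 1] = 60 from rfl, show chi [1, 1, 3] = 20 from rfl, show chi [1, 1, 2, 1] = 60 from rfl, show chi [1, 1, 1, 2] = 60 from rfl, show chi [1, 1, 1, 1, 1] = 120 from rfl, show chi [1] = 1 from rfl, show chi [2] = 1 from rfl, show chi [1, 1] = 2 from rfl, show chi [3] = 1 from rfl, show chi [2, 1] = 3 from rfl, show chi [1, 2] = 3 from rfl, show chi [1, 1, 1] = 6 from rfl]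
  abel

/-- Fifth-order KdV hierarchy member as a Pöppe polynomial:
`5 = 5̂ - 5·(3̂*1̂ + 2̂*2̂ + 1̂*3̂) + 10·(1̂*1̂*1̂)` in the Pöppe algebra. -/
theorem kdv_fifth_order :
    Finsupp.single [(5 : ℕ+)] (1 : ℝ)
      = sigExp 5
        - (5 : ℝ) • (poppeMul (sigExp 3) (sigExp 1) + poppeMul (sigExp 2) (sigExp 2)
            + poppeMul (sigExp 1) (sigExp 3))
        + (10 : ℝ) • poppeMul (poppeMul (sigExp 1) (sigExp 1)) (sigExp 1) := by

  rw [sig1, sig2, sig3, sig5]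
  simp only [poppeMul_add_left, poppeMul_add_right, poppeMul_smul_left, poppeMul_smul_right,
    poppeMul_single_single, ppWord, pn1, pn2, pn3, pn4, List.reverse_cons, List.reverse_nil,
    List.nil_append, List.cons_append, List.append_nil]
  module
end

section
/- Let $\Delta$ be the de-Pöppe coproduct on the free real vector space on compositions (including the empty composition $\nu$), defined on a composition $w$ by $\Delta(w) = \sum_{u,v} \langle u * v, w\rangle\; u \otimes v$, where the sum is over pairs of compositions (allowing $\nu$, with $\nu * w = w * \nu = w$) and $\langle \cdot,\cdot\rangle$ extracts the coefficient of $w$. Let $\varepsilon$ be the counit with $\varepsilon(\nu)=1$ and $\varepsilon(w)=0$ for $w \ne \nu$. Then the counit axiom holds: $(\mathrm{id}\otimes\varepsilon)\circ\Delta = \mathrm{id} = (\varepsilon\otimes\mathrm{id})\circ\Delta$ (under the canonical identifications $V\otimes\mathbb{R}\cong V\cong \mathbb{R}\otimes V$). -/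
open Finset

/-- The Pöppe product on basis compositions extended so that the empty
composition `ν = []` acts as a two-sided unit. -/
noncomputable def ppU (u v : List ℕ+) : List ℕ+ →₀ ℝ :=
  if u = [] then Finsupp.single v 1
  else if v = [] then Finsupp.single u 1
  else ppWord u v

/-- Counit axiom for the de-Pöppe coproduct.  Let `Δ` be the de-Pöppe coproduct
(characterised on basis elements by: the coefficient of `u ⊗ v` in `Δ(w)` is
`⟨u * v, w⟩`, the coefficient of `w` in the Pöppe product `u * v`; here
`V ⊗ V` is modelled as `(List ℕ+ × List ℕ+) →₀ ℝ`), and let `ε` be the counit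
with `ε(ν) = 1` and `ε(w) = 0` for `w ≠ ν`.  Then
`(id ⊗ ε) ∘ Δ = id = (ε ⊗ id) ∘ Δ` under the identifications `V ⊗ ℝ ≅ V ≅ ℝ ⊗ V`. -/
theorem de_poppe_counit_axiom
    (Δ : (List ℕ+ →₀ ℝ) →ₗ[ℝ] ((List ℕ+ × List ℕ+) →₀ ℝ))
    (hΔ : ∀ (w u v : List ℕ+), Δ (Finsupp.single w 1) (u, v) = (ppU u v) w)
    (ε : (List ℕ+ →₀ ℝ) →ₗ[ℝ] ℝ)
    (hε : ∀ w : List ℕ+, ε (Finsupp.single w 1) = if w = [] then 1 else 0) :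
    ∀ x : List ℕ+ →₀ ℝ,
      ((Δ x).sum fun p c => (c * ε (Finsupp.single p.2 1)) • Finsupp.single p.1 (1 : ℝ)) = x ∧
      ((Δ x).sum fun p c => (c * ε (Finsupp.single p.1 1)) • Finsupp.single p.2 (1 : ℝ)) = x := by
  have hpp1 : ∀ t w : List ℕ+, (ppU t [] : List ℕ+ →₀ ℝ) w = (Finsupp.single w (1:ℝ)) t := by
    intro t w
    by_cases ht : t = []
    · simp [ppU, ht, Finsupp.single_apply, eq_comm]
    · simp [ppU, ht, Finsupp.single_apply, eq_comm]
  have hpp2 : ∀ t w : List ℕ+, (ppU [] t : List ℕ+ →₀ ℝ) w = (Finsupp.single w (1:ℝ)) t := by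
    intro t w; simp [ppU, Finsupp.single_apply, eq_comm]
  intro x
  constructor
  · set F : (List ℕ+ × List ℕ+) → ℝ →ₗ[ℝ] (List ℕ+ →₀ ℝ) :=
      fun p => ε (Finsupp.single p.2 1) • Finsupp.lsingle p.1 with hF
    have hsum : ∀ y : (List ℕ+ × List ℕ+) →₀ ℝ,
        (y.sum fun p c => (c * ε (Finsupp.single p.2 1)) • Finsupp.single p.1 (1:ℝ))
        = Finsupp.lsum ℝ F y := by
      intro y
      rw [Finsupp.lsum_apply]
      refine Finsupp.sum_congr fun p _ => ?_
      simp [hF, Finsupp.smul_single', mul_comm]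
    have hmaps : (Finsupp.lsum ℝ F).comp Δ = LinearMap.id := by
      refine Finsupp.lhom_ext fun w b => ?_
      have hb : (Finsupp.single w b : List ℕ+ →₀ ℝ) = b • Finsupp.single w 1 := by
        simp [Finsupp.smul_single']
      rw [LinearMap.comp_apply, LinearMap.id_apply, hb, map_smul, map_smul]
      congr 1
      ext t
      rw [Finsupp.lsum_apply, Finsupp.sum_apply]
      refine (Finset.sum_eq_single ((t, ([] : List ℕ+))) ?_ ?_).trans ?_
      · intro p hp hne
        by_cases h2 : p.2 = []
        · have h1 : p.1 ≠ t := by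
            intro h; apply hne; obtain ⟨a, b⟩ := p; simp_all
          simp [hF, Finsupp.single_apply, h1]
        · simp [hF, hε, h2]
      · intro hnot
        rw [Finsupp.notMem_support_iff.mp hnot]
        simp
      · rw [hΔ]
        simp [hF, hε, hpp1 t w]
    rw [hsum]
    have := LinearMap.congr_fun hmaps x
    simpa using this
  · set F : (List ℕ+ × List ℕ+) → ℝ →ₗ[ℝ] (List ℕ+ →₀ ℝ) :=
      fun p => ε (Finsupp.single p.1 1) • Finsupp.lsingle p.2 with hF
    have hsum : ∀ y : (List ℕ+ × List ℕ+) →₀ ℝ,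
        (y.sum fun p c => (c * ε (Finsupp.single p.1 1)) • Finsupp.single p.2 (1:ℝ))
        = Finsupp.lsum ℝ F y := by
      intro y
      rw [Finsupp.lsum_apply]
      refine Finsupp.sum_congr fun p _ => ?_
      simp [hF, Finsupp.smul_single', mul_comm]
    have hmaps : (Finsupp.lsum ℝ F).comp Δ = LinearMap.id := by
      refine Finsupp.lhom_ext fun w b => ?_
      have hb : (Finsupp.single w b : List ℕ+ →₀ ℝ) = b • Finsupp.single w 1 := by
        simp [Finsupp.smul_single']
      rw [LinearMap.comp_apply, LinearMap.id_apply, hb, map_smul, map_smul]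
      congr 1
      ext t
      rw [Finsupp.lsum_apply, Finsupp.sum_apply]
      refine (Finset.sum_eq_single ((([] : List ℕ+), t)) ?_ ?_).trans ?_
      · intro p hp hne
        by_cases h1 : p.1 = []
        · have h2 : p.2 ≠ t := by
            intro h; apply hne; obtain ⟨a, b⟩ := p; simp_all
          simp [hF, Finsupp.single_apply, h2]
        · simp [hF, hε, h1]
      · intro hnot
        rw [Finsupp.notMem_support_iff.mp hnot]
        simp
      · rw [hΔ]
        simp [hF, hε, hpp2 t w]
    rw [hsum]
    have := LinearMap.congr_fun hmaps x
    simpa using this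
end

section
/- The de-Pöppe coproduct $\Delta$ is coassociative: $(\mathrm{id}\otimes\Delta)\circ\Delta = (\Delta\otimes\mathrm{id})\circ\Delta$ on the free real vector space over compositions (including the empty composition). Equivalently, for every composition $w$ and all triples $(u,v,z)$ of compositions, the coefficient of $u\otimes v \otimes z$ computed by first decomposing $w$ into left and right parts and then decomposing the right part equals the coefficient computed by decomposing the left part, i.e. $\sum_{y}\langle u*y, w\rangle\langle v*z, y\rangle = \sum_{y}\langle y*z, w\rangle\langle u*v, y\rangle$. -/
open Finset

lemma ppU_ne {u v : List ℕ+} (hu : u ≠ []) (hv : v ≠ []) : ppU u v = ppWord u v := by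
  simp [ppU, hu, hv]

lemma ppWord_eq (p : List ℕ+) (a b : ℕ+) (q : List ℕ+) :
    ppWord (p ++ [a]) (b :: q) =
      Finsupp.single (p ++ (a+1) :: b :: q) 1
      + Finsupp.single (p ++ a :: (b+1) :: q) 1
      + (2:ℝ) • Finsupp.single (p ++ a :: (1:ℕ+) :: b :: q) 1 := by
  have h : (p ++ [a]).reverse = a :: p.reverse := by simp
  unfold ppWord
  rw [h]
  simp [List.append_assoc]

lemma ppWord_single (a b : ℕ+) (q : List ℕ+) :
    ppWord [a] (b :: q) =
      Finsupp.single ((a+1) :: b :: q) 1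
      + Finsupp.single (a :: (b+1) :: q) 1
      + (2:ℝ) • Finsupp.single (a :: (1:ℕ+) :: b :: q) 1 := by
  simpa using ppWord_eq [] a b q

lemma ppWord_eq2 (p : List ℕ+) (x a b : ℕ+) (q : List ℕ+) :
    ppWord (p ++ [x, a]) (b :: q) =
      Finsupp.single (p ++ x :: (a+1) :: b :: q) 1
      + Finsupp.single (p ++ x :: a :: (b+1) :: q) 1
      + (2:ℝ) • Finsupp.single (p ++ x :: a :: (1:ℕ+) :: b :: q) 1 := by
  simpa [List.append_assoc] using ppWord_eq (p ++ [x]) a b q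

lemma ppWord_eq3 (p : List ℕ+) (x y a b : ℕ+) (q : List ℕ+) :
    ppWord (p ++ [x, y, a]) (b :: q) =
      Finsupp.single (p ++ x :: y :: (a+1) :: b :: q) 1
      + Finsupp.single (p ++ x :: y :: a :: (b+1) :: q) 1
      + (2:ℝ) • Finsupp.single (p ++ x :: y :: a :: (1:ℕ+) :: b :: q) 1 := by
  simpa [List.append_assoc] using ppWord_eq (p ++ [x, y]) a b q

lemma ppWord_eqc (m : List ℕ+) (x a b : ℕ+) (q : List ℕ+) :
    ppWord (x :: (m ++ [a])) (b :: q) =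
      Finsupp.single (x :: (m ++ (a+1) :: b :: q)) 1
      + Finsupp.single (x :: (m ++ a :: (b+1) :: q)) 1
      + (2:ℝ) • Finsupp.single (x :: (m ++ a :: (1:ℕ+) :: b :: q)) 1 := by
  simpa [List.append_assoc] using ppWord_eq (x :: m) a b q

lemma ppWord_eqm2 (p m : List ℕ+) (x y a b : ℕ+) (q : List ℕ+) :
    ppWord (p ++ x :: y :: (m ++ [a])) (b :: q) =
      Finsupp.single (p ++ x :: y :: (m ++ (a+1) :: b :: q)) 1
      + Finsupp.single (p ++ x :: y :: (m ++ a :: (b+1) :: q)) 1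
      + (2:ℝ) • Finsupp.single (p ++ x :: y :: (m ++ a :: (1:ℕ+) :: b :: q)) 1 := by
  simpa [List.append_assoc] using ppWord_eq (p ++ x :: y :: m) a b q

lemma ppWord_eqm3 (p m : List ℕ+) (x y z a b : ℕ+) (q : List ℕ+) :
    ppWord (p ++ x :: y :: z :: (m ++ [a])) (b :: q) =
      Finsupp.single (p ++ x :: y :: z :: (m ++ (a+1) :: b :: q)) 1
      + Finsupp.single (p ++ x :: y :: z :: (m ++ a :: (b+1) :: q)) 1
      + (2:ℝ) • Finsupp.single (p ++ x :: y :: z :: (m ++ a :: (1:ℕ+) :: b :: q)) 1 := by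
  simpa [List.append_assoc] using ppWord_eq (p ++ x :: y :: z :: m) a b q

noncomputable def Fmap (u : List ℕ+) (x : List ℕ+ →₀ ℝ) : List ℕ+ →₀ ℝ :=
  x.sum fun y c => c • ppU u y
noncomputable def Gmap (z : List ℕ+) (x : List ℕ+ →₀ ℝ) : List ℕ+ →₀ ℝ :=
  x.sum fun y c => c • ppU y z

lemma Fmap_single (u y : List ℕ+) (r : ℝ) : Fmap u (Finsupp.single y r) = r • ppU u y :=
  Finsupp.sum_single_index (by simp)
lemma Gmap_single (z y : List ℕ+) (r : ℝ) : Gmap z (Finsupp.single y r) = r • ppU y z :=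
  Finsupp.sum_single_index (by simp)
lemma Fmap_add (u : List ℕ+) (x y : List ℕ+ →₀ ℝ) : Fmap u (x + y) = Fmap u x + Fmap u y :=
  Finsupp.sum_add_index' (by simp) (fun _ b₁ b₂ => add_smul b₁ b₂ _)
lemma Gmap_add (z : List ℕ+) (x y : List ℕ+ →₀ ℝ) : Gmap z (x + y) = Gmap z x + Gmap z y :=
  Finsupp.sum_add_index' (by simp) (fun _ b₁ b₂ => add_smul b₁ b₂ _)
lemma Fmap_smul (u : List ℕ+) (r : ℝ) (x : List ℕ+ →₀ ℝ) : Fmap u (r • x) = r • Fmap u x := by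
  unfold Fmap
  rw [Finsupp.sum_smul_index (by simp), Finsupp.smul_sum]
  simp [mul_smul]
lemma Gmap_smul (z : List ℕ+) (r : ℝ) (x : List ℕ+ →₀ ℝ) : Gmap z (r • x) = r • Gmap z x := by
  unfold Gmap
  rw [Finsupp.sum_smul_index (by simp), Finsupp.smul_sum]
  simp [mul_smul]

lemma Fmap_nil (x : List ℕ+ →₀ ℝ) : Fmap [] x = x := by
  unfold Fmap
  have : ∀ y : List ℕ+, ppU [] y = Finsupp.single y 1 := fun y => if_pos rfl
  simp only [this, Finsupp.smul_single, smul_eq_mul, mul_one]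
  exact Finsupp.sum_single x
lemma Gmap_nil (x : List ℕ+ →₀ ℝ) : Gmap [] x = x := by
  unfold Gmap
  have : ∀ y : List ℕ+, ppU y [] = Finsupp.single y 1 := by
    intro y; unfold ppU; rcases eq_or_ne y [] with rfl | h <;> simp [*]
  simp only [this, Finsupp.smul_single, smul_eq_mul, mul_one]
  exact Finsupp.sum_single x

lemma key (u v z : List ℕ+) : Fmap u (ppU v z) = Gmap z (ppU u v) := by
  rcases eq_or_ne u [] with rfl | hu
  · rw [Fmap_nil, show ppU [] v = Finsupp.single v 1 from if_pos rfl, Gmap_single, one_smul]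
  rcases eq_or_ne z [] with rfl | hz
  · rw [Gmap_nil]
    have : ppU v [] = Finsupp.single v 1 := by
      unfold ppU; rcases eq_or_ne v [] with rfl | h <;> simp [*]
    rw [this, Fmap_single, one_smul]
  rcases eq_or_ne v [] with rfl | hv
  · rw [show ppU [] z = Finsupp.single z 1 from if_pos rfl, Fmap_single, one_smul]
    have : ppU u [] = Finsupp.single u 1 := by
      unfold ppU; rcases eq_or_ne u [] with rfl | h <;> simp [*]
    rw [this, Gmap_single, one_smul]
  obtain ⟨p, a, rfl⟩ : ∃ p a, u = p ++ [a] :=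
    ⟨u.dropLast, u.getLast hu, (List.dropLast_append_getLast hu).symm⟩
  obtain ⟨c, q, rfl⟩ := List.exists_cons_of_ne_nil hz
  obtain ⟨b, v', rfl⟩ := List.exists_cons_of_ne_nil hv
  rcases eq_or_ne v' [] with rfl | hv'
  · simp only [ne_eq, List.append_eq_nil_iff, List.cons_ne_nil, and_false, not_false_eq_true, ppU_ne, ppWord_single, ppWord_eq, ppWord_eq2, ppWord_eq3,
      Fmap_add, Fmap_smul, Fmap_single, Gmap_add, Gmap_smul, Gmap_single, one_smul, smul_add]
    module
  · obtain ⟨m, d, rfl⟩ : ∃ m d, v' = m ++ [d] :=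
      ⟨v'.dropLast, v'.getLast hv', (List.dropLast_append_getLast hv').symm⟩
    simp only [ne_eq, List.append_eq_nil_iff, List.cons_ne_nil, and_false, not_false_eq_true, ppU_ne, ppWord_eqc, ppWord_eq, ppWord_eqm2, ppWord_eqm3,
      Fmap_add, Fmap_smul, Fmap_single, Gmap_add, Gmap_smul, Gmap_single, one_smul, smul_add]
    module

/-- Coassociativity of the de-Pöppe coproduct, in coefficient form: for every
composition `w` and all triples `(u, v, z)` of compositions,
`∑_y ⟨u*y, w⟩ ⟨v*z, y⟩ = ∑_y ⟨y*z, w⟩ ⟨u*v, y⟩`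
(the sums over `y` being over the finitely many compositions with nonzero
coefficient, i.e. over the supports of `v*z` and `u*v` respectively). -/
theorem de_poppe_coassociativity (w u v z : List ℕ+) :
    ((ppU v z).sum fun y c => c * (ppU u y) w)
      = (ppU u v).sum fun y c => c * (ppU y z) w := by
  have hF : ((ppU v z).sum fun y c => c * (ppU u y) w) = (Fmap u (ppU v z)) w := by
    rw [Fmap, Finsupp.sum_apply]
    exact Finsupp.sum_congr fun y _ => by simp
  have hG : ((ppU u v).sum fun y c => c * (ppU y z) w) = (Gmap z (ppU u v)) w := by
    rw [Gmap, Finsupp.sum_apply]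
    exact Finsupp.sum_congr fun y _ => by simp
  rw [hF, hG, key]
end
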